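/- Let β, γ ∈ ℂ with β ≠ 0 and |β| ω₀ + |γ| ≤ ( ((1 + e²)^{3/2}/(√2 e)) (√2 + ω₀) )^{−1}. If p ∈ ℋ satisfies β p(z) + γ ≠ 0 on 𝔻 and p(z) + z p′(z)/(β p(z) + γ) ≺ √(1 + z) (principal branch), then p(z) ≺ 𝔅(z). -/

import Mathlib

open Complex

noncomputable section

/-- The open unit disk in the complex plane. -/
def unitDisk : Set ℂ := Metric.ball 0 1

/-- `f` is subordinate to `g` on the unit disk: there is an analytic Schwarz function `w`
with `w 0 = 0`, `|w z| < 1` on the disk, and `f = g ∘ w` on the disk. -/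
def Subord (f g : ℂ → ℂ) : Prop :=
  ∃ w : ℂ → ℂ, DifferentiableOn ℂ w unitDisk ∧ w 0 = 0 ∧
    (∀ z ∈ unitDisk, ‖w z‖ < 1) ∧ ∀ z ∈ unitDisk, f z = g (w z)

/-- The function `𝔅(z) = √(1 + tanh z)` (principal branch). -/
def bean (z : ℂ) : ℂ := (1 + Complex.tanh z) ^ ((1 : ℂ) / 2)

/-- `R₀ = e √(2/(e² - 1))`. -/
def R₀ : ℝ := Real.exp 1 * Real.sqrt (2 / (Real.exp 1 ^ 2 - 1))

/-- `ω₀ = max_{θ ∈ [0, 2π)} |𝔅(e^{iθ})|`. -/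
def ω₀ : ℝ :=
  sSup ((fun θ : ℝ => ‖bean (Complex.exp (θ * Complex.I))‖) '' Set.Ico 0 (2 * Real.pi))

/-! Put `h = p' / (βp + γ)`. On the circle `|z| = ρ` the hypothesis reads
`z h(z) = √(1 + w(z)) - p(z)`, so by the maximum principle a bound `|p - 1| ≤ M` on the closed
disc of radius `ρ` gives `|p'| ≤ (|β| + |γ|)(1 + M)(√2 + 1 + M)/ρ` there, and by the mean value
inequality `|p - 1| ≤ (|β| + |γ|)(1 + M)(√2 + 1 + M)` on the same disc. Since `ω₀ ≥ 1`, the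
hypothesis on `β, γ` forces `|β| + |γ| ≤ 1/15.2`, and then this self-improving bound rules out
`max |p - 1| ∈ (0.21, 11]`; as the maximum starts at `0` and grows continuously with `ρ`, it stays
below `0.21` on the whole disc. Finally `u = p² - 1` satisfies `|u| ≤ 1/2`, so `artanh u` is a
Schwarz function, and `𝔅 (artanh u) = √(p²) = p` because `Re p > 0`. -/

open Metric Set

namespace Complex

lemma norm_cpow_one_half (x : ℂ) : ‖x ^ ((1 : ℂ) / 2)‖ = √‖x‖ := by
  rw [show (1 : ℂ) / 2 = ((1 / 2 : ℝ) : ℂ) by norm_num, norm_cpow_real, Real.sqrt_eq_rpow]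

lemma sq_cpow_one_half {a : ℂ} (ha : 0 < a.re) : (a ^ 2) ^ ((1 : ℂ) / 2) = a := by
  have harg := abs_lt.mp (abs_arg_lt_pi_div_two_iff.mpr (Or.inl ha))
  simpa using
    pow_cpow_nat_inv (n := 2) two_ne_zero (by simpa using harg.1) (by simpa using harg.2.le)

lemma cosh_ne_zero_of_norm_le_one {z : ℂ} (hz : ‖z‖ ≤ 1) : cosh z ≠ 0 := by
  rw [← cos_mul_I, Ne, cos_eq_zero_iff]
  rintro ⟨k, hk⟩
  have hre : |((2 * k + 1) * Real.pi / 2 : ℝ)| ≤ 1 := by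
    calc |((2 * k + 1) * Real.pi / 2 : ℝ)| = |(z * I).re| := by rw [hk]; norm_cast
      _ ≤ ‖z * I‖ := abs_re_le_norm _
      _ ≤ 1 := by simpa using hz
  have hk' : (0 : ℝ) ≤ k ∨ (k : ℝ) ≤ -1 := by
    rcases le_or_gt 0 k with h | h
    · exact Or.inl (by exact_mod_cast h)
    · exact Or.inr (by exact_mod_cast Int.le_sub_one_of_lt h)
  rw [abs_le] at hre
  rcases hk' with h | h <;> nlinarith [Real.pi_gt_three]

def artanh (z : ℂ) : ℂ := (log (1 + z) - log (1 - z)) / 2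

-- No hypothesis is needed: when `cosh w = 0` both sides are `0`.
lemma tanh_eq_exp_mul_exp (w : ℂ) : tanh w = (exp w * exp w - 1) / (exp w * exp w + 1) := by
  have hE : 2 * exp w ≠ 0 := mul_ne_zero two_ne_zero (exp_ne_zero w)
  rw [tanh_eq_sinh_div_cosh, ← mul_div_mul_right _ _ hE, sinh, cosh, exp_neg]
  field_simp

lemma tanh_artanh {z : ℂ} (h₁ : 1 + z ≠ 0) (h₂ : 1 - z ≠ 0) : tanh (artanh z) = z := by
  rw [tanh_eq_exp_mul_exp, ← exp_add, artanh, add_halves, exp_sub, exp_log h₁, exp_log h₂]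
  field_simp
  ring

lemma norm_artanh_le {z : ℂ} (hz : ‖z‖ ≤ 1 / 2) : ‖artanh z‖ ≤ 3 / 2 * ‖z‖ := by
  have h₁ := norm_log_one_add_half_le_self hz
  have h₂ := norm_log_one_add_half_le_self (z := -z) (by rwa [norm_neg])
  rw [norm_neg, ← sub_eq_add_neg] at h₂
  rw [artanh, norm_div, RCLike.norm_ofNat]
  linarith [norm_sub_le (log (1 + z)) (log (1 - z))]

lemma differentiableOn_artanh : DifferentiableOn ℂ artanh (ball 0 1) := by
  intro z hz
  have hz : ‖z‖ < 1 := by simpa using hz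
  have h₁ : 1 + z ∈ slitPlane := mem_slitPlane_of_norm_lt_one hz
  have h₂ : 1 - z ∈ slitPlane := by
    simpa [sub_eq_add_neg] using mem_slitPlane_of_norm_lt_one (z := -z) (by simpa using hz)
  unfold artanh
  fun_prop (disch := assumption)

end Complex

lemma forall_mem_ball_le_of_bootstrap {E : Type*} [NormedAddCommGroup E] [NormedSpace ℝ E]
    [ProperSpace E] {f : E → ℝ} {c : E} {R a b : ℝ} (hf : ContinuousOn f (ball c R))
    (hab : a < b) (hc : f c ≤ a)
    (H : ∀ ρ, 0 < ρ → ρ < R → (∀ z ∈ closedBall c ρ, f z ≤ b) → ∀ z ∈ closedBall c ρ, f z ≤ a) :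
    ∀ z ∈ ball c R, f z ≤ a := by
  -- With open balls, each point `z` only excludes the radii `ρ > dist z c`, so `s` is closed.
  set s : Set ℝ := {ρ | ∀ z ∈ ball c ρ, f z ≤ a}
  have hs : IsClosed s := by
    simp only [s, mem_ball, ofPred_forall]
    refine isClosed_iInter fun z => ?_
    by_cases hz : f z ≤ a
    · simp [hz]
    · simpa [hz] using isClosed_le continuous_id continuous_const
  have closedBall_of_mem {ρ : ℝ} (hρ : ρ ∈ s) (hρR : ρ < R) : ∀ z ∈ closedBall c ρ, f z ≤ a := by
    rcases eq_or_ne ρ 0 with rfl | hρ0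
    · simp_all
    have hK : IsClosed (closedBall c ρ ∩ f ⁻¹' Iic a) :=
      (hf.mono (closedBall_subset_ball hρR)).preimage_isClosed_of_isClosed isClosed_closedBall
        isClosed_Iic
    have : closure (ball c ρ) ⊆ closedBall c ρ ∩ f ⁻¹' Iic a :=
      hK.closure_subset_iff.mpr fun z hz => ⟨ball_subset_closedBall hz, hρ z hz⟩
    rw [closure_ball c hρ0] at this
    exact fun z hz => (this hz).2
  intro z hz
  obtain ⟨r, hzr, hrR⟩ := exists_between (mem_ball.mp hz)
  suffices Icc 0 r ⊆ s from this ⟨dist_nonneg.trans hzr.le, le_rfl⟩ z hzr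
  refine (hs.inter isClosed_Icc).Icc_subset_of_forall_mem_nhdsWithin
    (fun z hz => absurd (mem_ball.mp hz) dist_nonneg.not_gt) fun ρ ⟨hρ, hρ0, hρr⟩ => ?_
  obtain ⟨δ, hδ, hδU⟩ := (isCompact_closedBall c ρ).exists_thickening_subset_open
    (hf.isOpen_inter_preimage isOpen_ball isOpen_Iio)
    fun z hz => ⟨closedBall_subset_ball (hρr.trans hrR) hz,
      (closedBall_of_mem hρ (hρr.trans hrR) z hz).trans_lt hab⟩
  set ρ' := min (ρ + δ / 2) r
  have hρρ' : ρ < ρ' := lt_min (by linarith) hρr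
  have hρ'R : ρ' < R := (min_le_right _ _).trans_lt hrR
  have hfb : ∀ z ∈ closedBall c ρ', f z ≤ b := by
    intro z hz
    refine (hδU ?_).2.le
    rw [thickening_closedBall hδ hρ0]
    exact mem_ball.mpr ((mem_closedBall.mp hz).trans_lt (by simp [ρ']; left; linarith))
  refine mem_nhdsWithin_of_mem_nhds
    (Filter.mem_of_superset (Iio_mem_nhds hρρ') fun ρ'' hρ'' z hz => ?_)
  exact H ρ' (hρ0.trans_lt hρρ') hρ'R hfb z (ball_subset_closedBall (ball_subset_ball hρ''.le hz))

lemma norm_bean (z : ℂ) : ‖bean z‖ = √‖1 + tanh z‖ := norm_cpow_one_half _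

lemma continuous_norm_bean_circle : Continuous fun θ : ℝ => ‖bean (exp (θ * I))‖ := by
  have hcosh (θ : ℝ) : cosh (exp (θ * I)) ≠ 0 :=
    cosh_ne_zero_of_norm_le_one (norm_exp_ofReal_mul_I θ).le
  have htanh : Continuous fun θ : ℝ => tanh (exp (θ * I)) := by
    simp_rw [tanh_eq_sinh_div_cosh]
    exact Continuous.div (by fun_prop) (by fun_prop) hcosh
  simp_rw [norm_bean]
  exact (continuous_const.add htanh).norm.sqrt

lemma one_le_ω₀ : 1 ≤ ω₀ := by
  have hbdd : BddAbove ((fun θ : ℝ => ‖bean (exp (θ * I))‖) '' Ico 0 (2 * Real.pi)) :=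
    ((isCompact_Icc.image continuous_norm_bean_circle).bddAbove).mono
      (image_mono Ico_subset_Icc_self)
  refine le_trans ?_ (le_csSup hbdd ⟨0, ⟨le_rfl, by positivity⟩, rfl⟩)
  have htanh : 0 ≤ Real.tanh 1 := by
    rw [Real.tanh_eq_sinh_div_cosh]
    exact div_nonneg (Real.sinh_nonneg_iff.mpr zero_le_one) (Real.cosh_pos 1).le
  have h : ‖1 + tanh 1‖ = 1 + Real.tanh 1 := by
    rw [← ofReal_one, ← ofReal_tanh, ← ofReal_add, norm_real, Real.norm_of_nonneg (by positivity)]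
  simp [norm_bean, h, htanh]

lemma inv_bound_le_of_one_le {ω : ℝ} (hω : 1 ≤ ω) :
    ((1 + Real.exp 1 ^ 2) ^ ((3 : ℝ) / 2) / (√2 * Real.exp 1) * (√2 + ω))⁻¹ ≤ 1 / 15.2 := by
  have he := Real.exp_one_gt_d9
  have he' := Real.exp_one_lt_d9
  have hs2 : √2 < 1.4143 := by rw [Real.sqrt_lt' (by norm_num)]; norm_num
  have hs2' : 1.4142 < √2 := by rw [Real.lt_sqrt (by norm_num)]; norm_num
  have hpos : 0 < 1 + Real.exp 1 ^ 2 := by positivity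
  have hpow : (1 + Real.exp 1 ^ 2) ^ ((3 : ℝ) / 2) =
      (1 + Real.exp 1 ^ 2) * √(1 + Real.exp 1 ^ 2) := by
    rw [show (3 : ℝ) / 2 = 1 + 1 / 2 by norm_num, Real.rpow_add hpos, Real.rpow_one,
      Real.sqrt_eq_rpow]
  have hsqrt : 2.896 < √(1 + Real.exp 1 ^ 2) := by rw [Real.lt_sqrt (by norm_num)]; nlinarith
  have hX : 6.3 ≤ (1 + Real.exp 1 ^ 2) ^ ((3 : ℝ) / 2) / (√2 * Real.exp 1) := by
    rw [le_div_iff₀ (by positivity), hpow]; nlinarith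
  rw [one_div, inv_le_inv₀ (by positivity) (by norm_num)]
  nlinarith

section Subordination

variable {β γ : ℂ} {p w : ℂ → ℂ}

lemma norm_deriv_div_le (hp : DifferentiableOn ℂ p unitDisk)
    (hne : ∀ z ∈ unitDisk, β * p z + γ ≠ 0) (hw : ∀ z ∈ unitDisk, ‖w z‖ < 1)
    (heq : ∀ z ∈ unitDisk, p z + z * deriv p z / (β * p z + γ) = (1 + w z) ^ ((1 : ℂ) / 2))
    {ρ M : ℝ} (hρ : 0 < ρ) (hρ1 : ρ < 1) (hM : ∀ z ∈ sphere (0 : ℂ) ρ, ‖p z - 1‖ ≤ M) :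
    ∀ z ∈ closedBall (0 : ℂ) ρ, ‖deriv p z / (β * p z + γ)‖ ≤ (√2 + 1 + M) / ρ := by
  have hball : closedBall (0 : ℂ) ρ ⊆ unitDisk := closedBall_subset_ball hρ1
  have hd : DifferentiableOn ℂ (fun z => deriv p z / (β * p z + γ)) unitDisk :=
    (hp.analyticOnNhd isOpen_ball).deriv.differentiableOn.div
      ((hp.const_mul β).add_const γ) hne
  intro z hz
  refine norm_le_of_forall_mem_frontier_norm_le isBounded_ball (hd.diffContOnCl_ball hball)
    (fun ζ hζ => ?_) (by rwa [closure_ball _ hρ.ne'])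
  rw [frontier_ball _ hρ.ne'] at hζ
  have hζD := hball (sphere_subset_closedBall hζ)
  have hrel : ζ * (deriv p ζ / (β * p ζ + γ)) = (1 + w ζ) ^ ((1 : ℂ) / 2) - 1 - (p ζ - 1) := by
    rw [← heq ζ hζD]; ring
  have hsqrt : ‖(1 + w ζ) ^ ((1 : ℂ) / 2)‖ ≤ √2 := by
    rw [norm_cpow_one_half]
    exact Real.sqrt_le_sqrt ((norm_add_le _ _).trans (by simp; linarith [hw ζ hζD]))
  rw [le_div_iff₀ hρ, mul_comm, ← mem_sphere_zero_iff_norm.mp hζ, ← norm_mul, hrel]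
  calc _ ≤ ‖(1 + w ζ) ^ ((1 : ℂ) / 2)‖ + ‖(1 : ℂ)‖ + ‖p ζ - 1‖ :=
        (norm_sub_le _ _).trans (add_le_add_left (norm_sub_le _ _) _)
    _ ≤ √2 + 1 + M := by rw [norm_one]; linarith [hM ζ hζ]

lemma norm_sub_one_le_of_forall_closedBall (hp : DifferentiableOn ℂ p unitDisk) (hp0 : p 0 = 1)
    (hne : ∀ z ∈ unitDisk, β * p z + γ ≠ 0) (hw : ∀ z ∈ unitDisk, ‖w z‖ < 1)
    (heq : ∀ z ∈ unitDisk, p z + z * deriv p z / (β * p z + γ) = (1 + w z) ^ ((1 : ℂ) / 2))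
    {ρ M : ℝ} (hρ : 0 < ρ) (hρ1 : ρ < 1) (hM : ∀ z ∈ closedBall (0 : ℂ) ρ, ‖p z - 1‖ ≤ M) :
    ∀ z ∈ closedBall (0 : ℂ) ρ, ‖p z - 1‖ ≤ (‖β‖ + ‖γ‖) * (1 + M) * (√2 + 1 + M) := by
  set C := (‖β‖ + ‖γ‖) * (1 + M) * (√2 + 1 + M)
  have hM0 : 0 ≤ M := by simpa [hp0] using hM 0 (mem_closedBall_self hρ.le)
  have hball : closedBall (0 : ℂ) ρ ⊆ unitDisk := closedBall_subset_ball hρ1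
  have hderiv : ∀ z ∈ closedBall (0 : ℂ) ρ, ‖deriv p z‖ ≤ C / ρ := by
    intro z hz
    have hpz : ‖p z‖ ≤ 1 + M := by
      have := norm_add_le (p z - 1) 1
      rw [sub_add_cancel, norm_one] at this
      linarith [hM z hz]
    have hg : ‖β * p z + γ‖ ≤ (‖β‖ + ‖γ‖) * (1 + M) := by
      calc ‖β * p z + γ‖ ≤ ‖β‖ * ‖p z‖ + ‖γ‖ := (norm_add_le _ _).trans_eq (by rw [norm_mul])
        _ ≤ ‖β‖ * (1 + M) + ‖γ‖ * (1 + M) := by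
          gcongr; exact le_mul_of_one_le_right (norm_nonneg γ) (by linarith)
        _ = (‖β‖ + ‖γ‖) * (1 + M) := by ring
    have hh := norm_deriv_div_le hp hne hw heq hρ hρ1
      (fun ζ hζ => hM ζ (sphere_subset_closedBall hζ)) z hz
    calc ‖deriv p z‖ = ‖β * p z + γ‖ * ‖deriv p z / (β * p z + γ)‖ := by
          rw [← norm_mul, mul_div_cancel₀ _ (hne z (hball hz))]
      _ ≤ (‖β‖ + ‖γ‖) * (1 + M) * ((√2 + 1 + M) / ρ) := by gcongr
      _ = C / ρ := by rw [mul_div_assoc]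
  intro z hz
  have hmvt := (convex_closedBall (0 : ℂ) ρ).norm_image_sub_le_of_norm_deriv_le
    (fun x hx => hp.differentiableAt (isOpen_ball.mem_nhds (hball hx))) hderiv
    (mem_closedBall_self hρ.le) hz
  rw [hp0, sub_zero] at hmvt
  calc ‖p z - 1‖ ≤ C / ρ * ‖z‖ := hmvt
    _ ≤ C / ρ * ρ := by gcongr; exact mem_closedBall_zero_iff.mp hz
    _ = C := div_mul_cancel₀ _ hρ.ne'

lemma norm_sub_one_le_of_norm_add_norm_le (hp : DifferentiableOn ℂ p unitDisk) (hp0 : p 0 = 1)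
    (hne : ∀ z ∈ unitDisk, β * p z + γ ≠ 0) (hw : ∀ z ∈ unitDisk, ‖w z‖ < 1)
    (heq : ∀ z ∈ unitDisk, p z + z * deriv p z / (β * p z + γ) = (1 + w z) ^ ((1 : ℂ) / 2))
    (hβγ : ‖β‖ + ‖γ‖ ≤ 1 / 15.2) :
    ∀ z ∈ unitDisk, ‖p z - 1‖ ≤ 0.21 := by
  have hcont : ContinuousOn (fun z => ‖p z - 1‖) unitDisk :=
    (hp.continuousOn.sub continuousOn_const).norm
  refine forall_mem_ball_le_of_bootstrap (b := 11) hcont (by norm_num) (by norm_num [hp0])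
    fun ρ hρ hρ1 h11 => ?_
  obtain ⟨z₀, hz₀, hmax⟩ := (isCompact_closedBall (0 : ℂ) ρ).exists_isMaxOn
    (nonempty_closedBall.mpr hρ.le) (hcont.mono (closedBall_subset_ball hρ1))
  set M := ‖p z₀ - 1‖
  have hM := norm_sub_one_le_of_forall_closedBall hp hp0 hne hw heq hρ hρ1 hmax z₀ hz₀
  have hs2 : √2 < 1.4143 := by rw [Real.sqrt_lt' (by norm_num)]; norm_num
  have hM' : M ≤ (1 + M) * (2.4143 + M) / 15.2 := by
    refine hM.trans ?_
    rw [div_eq_mul_one_div, mul_comm _ (1 / 15.2 : ℝ), ← mul_assoc]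
    gcongr
    linarith
  have hM11 : M ≤ 11 := h11 z₀ hz₀
  -- `(1 + M)(2.4143 + M) - 15.2 M` is negative on `[0.21, 11]`.
  suffices M ≤ 0.21 from fun z hz => (hmax hz).trans this
  rw [le_div_iff₀ (by norm_num)] at hM'
  by_contra! h
  nlinarith [mul_nonneg (sub_nonneg.2 h.le) (sub_nonneg.2 hM11)]

end Subordination

lemma subord_bean_of_norm_sq_sub_one_le {p : ℂ → ℂ} (hp : DifferentiableOn ℂ p unitDisk)
    (hp0 : p 0 = 1) (hsq : ∀ z ∈ unitDisk, ‖p z ^ 2 - 1‖ ≤ 1 / 2)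
    (hre : ∀ z ∈ unitDisk, 0 < (p z).re) :
    Subord p bean := by
  have hmaps : MapsTo (fun z => p z ^ 2 - 1) unitDisk (ball 0 1) :=
    fun z hz => mem_ball_zero_iff.mpr ((hsq z hz).trans_lt (by norm_num))
  refine ⟨fun z => artanh (p z ^ 2 - 1),
    differentiableOn_artanh.comp ((hp.pow 2).sub_const 1) hmaps, by simp [hp0, artanh],
    fun z hz => (norm_artanh_le (hsq z hz)).trans_lt (by linarith [hsq z hz]), fun z hz => ?_⟩
  have hu : ‖p z ^ 2 - 1‖ < 1 := mem_ball_zero_iff.mp (hmaps hz)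
  have h₁ : 1 + (p z ^ 2 - 1) ≠ 0 := slitPlane_ne_zero (mem_slitPlane_of_norm_lt_one hu)
  have h₂ : 1 - (p z ^ 2 - 1) ≠ 0 := by
    rw [sub_eq_add_neg]
    exact slitPlane_ne_zero (mem_slitPlane_of_norm_lt_one (by rwa [norm_neg]))
  rw [bean, tanh_artanh h₁ h₂, add_sub_cancel, sq_cpow_one_half (hre z hz)]

theorem stmt_13_general (β γ : ℂ)
    (hβγ : ‖β‖ * ω₀ + ‖γ‖ ≤
        ((1 + Real.exp 1 ^ 2) ^ ((3 : ℝ) / 2) / (Real.sqrt 2 * Real.exp 1) *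
          (Real.sqrt 2 + ω₀))⁻¹)
    (p : ℂ → ℂ) (hp : DifferentiableOn ℂ p unitDisk) (hp0 : p 0 = 1)
    (hne : ∀ z ∈ unitDisk, β * p z + γ ≠ 0)
    (hsub : Subord (fun z => p z + z * deriv p z / (β * p z + γ))
        (fun z => (1 + z) ^ ((1 : ℂ) / 2))) :
    Subord p bean := by
  obtain ⟨w, -, -, hw, heq⟩ := hsub
  have hsmall : ‖β‖ + ‖γ‖ ≤ 1 / 15.2 := by
    have := hβγ.trans (inv_bound_le_of_one_le one_le_ω₀)
    nlinarith [one_le_ω₀, norm_nonneg β]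
  have hp1 := norm_sub_one_le_of_norm_add_norm_le hp hp0 hne hw heq hsmall
  refine subord_bean_of_norm_sq_sub_one_le hp hp0 (fun z hz => ?_) (fun z hz => ?_)
  · calc ‖p z ^ 2 - 1‖ = ‖p z - 1‖ * ‖p z - 1 + 2‖ := by rw [← norm_mul]; ring_nf
      _ ≤ 0.21 * (0.21 + 2) := by
        gcongr
        · exact hp1 z hz
        · exact (norm_add_le _ _).trans (by norm_num; linarith [hp1 z hz])
      _ ≤ 1 / 2 := by norm_num
  · have := (abs_le.mp ((abs_re_le_norm (p z - 1)).trans (hp1 z hz))).1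
    simp only [sub_re, one_re] at this
    linarith

theorem stmt_13 (β γ : ℂ) (hβ : β ≠ 0)
    (hβγ : ‖β‖ * ω₀ + ‖γ‖ ≤
        ((1 + Real.exp 1 ^ 2) ^ ((3 : ℝ) / 2) / (Real.sqrt 2 * Real.exp 1) *
          (Real.sqrt 2 + ω₀))⁻¹)
    (p : ℂ → ℂ) (hp : DifferentiableOn ℂ p unitDisk) (hp0 : p 0 = 1)
    (hne : ∀ z ∈ unitDisk, β * p z + γ ≠ 0)
    (hsub : Subord (fun z => p z + z * deriv p z / (β * p z + γ))
        (fun z => (1 + z) ^ ((1 : ℂ) / 2))) :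
    Subord p bean :=
  stmt_13_general β γ hβγ p hp hp0 hne hsub
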